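/- A symmetric n×n real matrix C is completely positive if and only if the Q_n-truncated multisequence c = (C_{ij})_{i≤j}, viewed as indexed by {α ∈ ℕ^n : |α| = 2} via c_{e_i+e_j} = C_{ij}, admits a representing measure supported in the standard simplex Δ_n = {x ∈ ℝ^n_+ : x_1 + ··· + x_n = 1}. -/

import Mathlib

/-!
Scaling each column `u` of a factorization `C = ∑ u uᵀ` to the point `u / ∑ᵢ uᵢ` of the simplex,
with weight `(∑ᵢ uᵢ)²`, gives an atomic representing measure. Conversely, the second-moment matrix
of a measure `μ` on the simplex is `μ(ℝⁿ) • ⨍ x xᵀ dμ`, and this average lies in every closed convex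
set containing `{x xᵀ : x ∈ Δₙ}`. In finite dimension the convex hull of a compact set is compact
(Carathéodory), hence closed, so the average is a finite convex combination `∑ wₖ xₖ xₖᵀ`, that is,
a sum of the rank-one matrices `(√wₖ xₖ)(√wₖ xₖ)ᵀ` with nonnegative entries.
-/

open MeasureTheory Set

section ConvexHull

variable {E : Type*} [NormedAddCommGroup E] [NormedSpace ℝ E]

theorem isCompact_image_sum_smul_stdSimplex {K : Set E} (hK : IsCompact K) (m : ℕ) :
    IsCompact ((fun p : (Fin m → ℝ) × (Fin m → E) => ∑ k, p.1 k • p.2 k) ''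
      (stdSimplex ℝ (Fin m) ×ˢ univ.pi fun _ => K)) :=
  ((isCompact_stdSimplex ℝ _).prod (isCompact_univ_pi fun _ => hK)).image (by fun_prop)

theorem convexHull_eq_biUnion_image_sum_smul_stdSimplex [FiniteDimensional ℝ E] (K : Set E) :
    convexHull ℝ K = ⋃ m ∈ Finset.range (Module.finrank ℝ E + 2),
      (fun p : (Fin m → ℝ) × (Fin m → E) => ∑ k, p.1 k • p.2 k) ''
        (stdSimplex ℝ (Fin m) ×ˢ univ.pi fun _ => K) := by
  apply Subset.antisymm
  · intro x hx
    obtain ⟨ι, _, z, w, hzK, hz, hw0, hw1, rfl⟩ := eq_pos_convex_span_of_mem_convexHull hx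
    have hcard : Fintype.card ι < Module.finrank ℝ E + 2 :=
      Nat.lt_succ_of_le (hz.card_le_finrank_succ.trans
        (Nat.succ_le_succ (Submodule.finrank_le _)))
    let e := (Fintype.equivFin ι).symm
    refine mem_iUnion₂.2 ⟨_, Finset.mem_range.2 hcard, (w ∘ e, z ∘ e),
      ⟨⟨fun k => (hw0 _).le, ?_⟩, fun k _ => hzK ⟨_, rfl⟩⟩, e.sum_comp fun i => w i • z i⟩
    exact (e.sum_comp w).trans hw1
  · simp only [iUnion_subset_iff]
    rintro m - _ ⟨⟨w, y⟩, ⟨⟨hw0, hw1⟩, hy⟩, rfl⟩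
    exact (convex_convexHull ℝ K).sum_mem (fun k _ => hw0 k) hw1
      fun k _ => subset_convexHull ℝ K (hy k trivial)

theorem IsCompact.convexHull [FiniteDimensional ℝ E] {K : Set E} (hK : IsCompact K) :
    IsCompact (convexHull ℝ K) := by
  rw [convexHull_eq_biUnion_image_sum_smul_stdSimplex]
  exact Finset.isCompact_biUnion _ fun m _ => isCompact_image_sum_smul_stdSimplex hK m

end ConvexHull

section Dirac

variable {X κ : Type*} [MeasurableSpace X] [MeasurableSingletonClass X] [Fintype κ]

theorem integrable_ofReal_smul_dirac (c : ℝ) (x : X) (g : X → ℝ) :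
    Integrable g (ENNReal.ofReal c • Measure.dirac x) :=
  (integrable_dirac enorm_lt_top).smul_measure ENNReal.ofReal_ne_top

theorem integrable_sum_ofReal_smul_dirac (c : κ → ℝ) (x : κ → X) (g : X → ℝ) :
    Integrable g (∑ k, ENNReal.ofReal (c k) • Measure.dirac (x k)) :=
  integrable_finsetSum_measure.2 fun k _ => integrable_ofReal_smul_dirac (c k) (x k) g

theorem integral_sum_ofReal_smul_dirac {c : κ → ℝ} (hc : ∀ k, 0 ≤ c k) (x : κ → X) (g : X → ℝ) :
    ∫ y, g y ∂(∑ k, ENNReal.ofReal (c k) • Measure.dirac (x k)) = ∑ k, c k * g (x k) := by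
  rw [integral_finsetSum_measure fun k _ => integrable_ofReal_smul_dirac (c k) (x k) g]
  refine Finset.sum_congr rfl fun k _ => ?_
  rw [integral_smul_measure, integral_dirac, ENNReal.toReal_ofReal (hc k), smul_eq_mul]

theorem sum_ofReal_smul_dirac_apply_eq_zero {c : κ → ℝ} {x : κ → X} {s : Set X}
    (hs : ∀ k, c k ≠ 0 → x k ∉ s) :
    (∑ k, ENNReal.ofReal (c k) • Measure.dirac (x k)) s = 0 := by
  simp only [Measure.coe_finsetSum, Finset.sum_apply, Measure.smul_apply, smul_eq_mul,
    Measure.dirac_apply]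
  refine Finset.sum_eq_zero fun k _ => ?_
  by_cases hk : c k = 0
  · simp [hk]
  · simp [indicator_of_notMem (hs k hk)]

end Dirac

theorem inv_sum_smul_mem_stdSimplex {ι : Type*} [Fintype ι] {v : ι → ℝ} (hv : ∀ i, 0 ≤ v i)
    (hs : ∑ i, v i ≠ 0) : (∑ i, v i)⁻¹ • v ∈ stdSimplex ℝ ι :=
  ⟨fun i => smul_nonneg (inv_nonneg.2 (Finset.sum_nonneg fun i _ => hv i)) (hv i), by
    simp only [Pi.smul_apply, smul_eq_mul, ← Finset.mul_sum, inv_mul_cancel₀ hs]⟩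

namespace Matrix

variable {ι : Type*}

def IsCompletelyPositive (C : Matrix ι ι ℝ) : Prop :=
  ∃ (r : ℕ) (u : Fin r → ι → ℝ), (∀ k i, 0 ≤ u k i) ∧ ∀ i j, C i j = ∑ k, u k i * u k j

theorem isCompletelyPositive_of_mem_convexHull {t : ℝ} (ht : 0 ≤ t) {y : ι → ι → ℝ}
    (hy : y ∈ convexHull ℝ ((fun p : ι → ℝ => fun i j => p i * p j) '' {p | ∀ i, 0 ≤ p i})) :
    (of (t • y)).IsCompletelyPositive := by
  obtain ⟨κ, _, w, z, hw0, -, hz, rfl⟩ := mem_convexHull_iff_exists_fintype.1 hy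
  choose p hp hpz using hz
  let e := (Fintype.equivFin κ).symm
  refine ⟨Fintype.card κ, fun k i => √(t * w (e k)) * p (e k) i,
    fun k i => mul_nonneg (Real.sqrt_nonneg _) (hp _ i), fun i j => ?_⟩
  have hsq : ∀ l, √(t * w l) * p l i * (√(t * w l) * p l j) = t * (w l * (p l i * p l j)) :=
    fun l => by
      rw [mul_mul_mul_comm, Real.mul_self_sqrt (mul_nonneg ht (hw0 l))]
      ring
  simp only [of_apply, Pi.smul_apply, Finset.sum_apply, smul_eq_mul, ← hpz, Finset.mul_sum,
    hsq]
  exact (e.sum_comp fun l => t * (w l * (p l i * p l j))).symm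


variable [Fintype ι]

theorem IsCompletelyPositive.exists_measure_stdSimplex {C : Matrix ι ι ℝ}
    (hC : C.IsCompletelyPositive) :
    ∃ μ : Measure (ι → ℝ), μ (stdSimplex ℝ ι)ᶜ = 0 ∧
      ∀ i j, Integrable (fun x => x i * x j) μ ∧ C i j = ∫ x, x i * x j ∂μ := by
  obtain ⟨r, u, hu, hCu⟩ := hC
  set s : Fin r → ℝ := fun k => ∑ i, u k i
  have hzero : ∀ k, s k = 0 → u k = 0 := fun k hk =>
    funext fun i => (Finset.sum_eq_zero_iff_of_nonneg fun i _ => hu k i).1 hk i (Finset.mem_univ i)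
  have hmoment : ∀ k i j, s k ^ 2 * (((s k)⁻¹ • u k) i * ((s k)⁻¹ • u k) j) = u k i * u k j := by
    intro k i j
    by_cases hk : s k = 0
    · simp [hzero k hk]
    · simp only [Pi.smul_apply, smul_eq_mul]
      field_simp
  refine ⟨∑ k, ENNReal.ofReal (s k ^ 2) • Measure.dirac ((s k)⁻¹ • u k), ?_, fun i j =>
    ⟨integrable_sum_ofReal_smul_dirac _ _ _, ?_⟩⟩
  · exact sum_ofReal_smul_dirac_apply_eq_zero fun k hk =>
      notMem_compl_iff.2 <| inv_sum_smul_mem_stdSimplex (hu k) (by simpa using hk)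
  · rw [integral_sum_ofReal_smul_dirac (fun k => sq_nonneg _), hCu]
    exact Finset.sum_congr rfl fun k _ => (hmoment k i j).symm

theorem isFiniteMeasure_of_ae_mem_stdSimplex {μ : Measure (ι → ℝ)}
    (hμ : ∀ᵐ x ∂μ, x ∈ stdSimplex ℝ ι) (hint : ∀ i j, Integrable (fun x => x i * x j) μ) :
    IsFiniteMeasure μ := by
  have hsum : Integrable (fun x : ι → ℝ => ∑ i, ∑ j, x i * x j) μ :=
    integrable_finsetSum _ fun i _ => integrable_finsetSum _ fun j _ => hint i j
  have hone : Integrable (fun _ => (1 : ℝ)) μ :=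
    hsum.congr <| hμ.mono fun x hx => by
      simp only [← Finset.sum_mul_sum, hx.2, one_mul]
  exact (integrable_const_iff_isFiniteMeasure one_ne_zero).1 hone

theorem isCompletelyPositive_of_measure_stdSimplex {μ : Measure (ι → ℝ)}
    (hμ : μ (stdSimplex ℝ ι)ᶜ = 0) (hint : ∀ i j, Integrable (fun x => x i * x j) μ) :
    (of fun i j => ∫ x, x i * x j ∂μ).IsCompletelyPositive := by
  have hae : ∀ᵐ x ∂μ, x ∈ stdSimplex ℝ ι := mem_ae_iff.2 hμ
  have := isFiniteMeasure_of_ae_mem_stdSimplex hae hint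
  set f : (ι → ℝ) → ι → ι → ℝ := fun x i j => x i * x j
  have hf : Integrable f μ := Integrable.of_eval fun i => Integrable.of_eval (hint i)
  have hmoments : (of fun i j => ∫ x, x i * x j ∂μ) = of (μ.real univ • ⨍ x, f x ∂μ) := by
    ext i j
    rw [of_apply, of_apply, measure_smul_average, eval_integral (fun i => hf.eval i),
      eval_integral (hint i)]
  rw [hmoments]
  refine isCompletelyPositive_of_mem_convexHull measureReal_nonneg ?_
  rcases eq_zero_or_neZero μ with rfl | _
  · rw [average_zero_measure]
    exact subset_convexHull ℝ _ ⟨0, fun _ => le_rfl, funext fun _ => funext fun _ => mul_zero 0⟩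
  have hK : IsCompact (f '' stdSimplex ℝ ι) := (isCompact_stdSimplex ℝ ι).image (by fun_prop)
  exact convexHull_mono (image_mono fun x hx => hx.1) <|
    (convex_convexHull ℝ _).average_mem hK.convexHull.isClosed
      (hae.mono fun x hx => subset_convexHull ℝ _ (mem_image_of_mem f hx)) hf

end Matrix

theorem completelyPositive_iff_simplex_measure_general
    (n : ℕ) (C : Matrix (Fin n) (Fin n) ℝ) :
    (∃ (r : ℕ) (u : Fin r → (Fin n → ℝ)),
      (∀ k i, 0 ≤ u k i) ∧ ∀ i j, C i j = ∑ k, u k i * u k j) ↔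
    (∃ μ : Measure (Fin n → ℝ),
      μ {x : Fin n → ℝ | (∀ i, 0 ≤ x i) ∧ ∑ i, x i = 1}ᶜ = 0 ∧
      ∀ i j, Integrable (fun x => x i * x j) μ ∧ C i j = ∫ x, x i * x j ∂μ) := by
  refine ⟨Matrix.IsCompletelyPositive.exists_measure_stdSimplex, ?_⟩
  rintro ⟨μ, hμ, hmoments⟩
  have hC : C = Matrix.of fun i j => ∫ x, x i * x j ∂μ := Matrix.ext fun i j => (hmoments i j).2
  rw [hC]
  exact Matrix.isCompletelyPositive_of_measure_stdSimplex hμ fun i j => (hmoments i j).1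

/-- A symmetric `n×n` real matrix `C` is completely positive iff
the `Q_n`-truncated multisequence `c_{e_i+e_j} = C_{ij}` admits a representing
measure supported in the standard simplex `Δ_n`. -/
theorem completelyPositive_iff_simplex_measure
    (n : ℕ) (C : Matrix (Fin n) (Fin n) ℝ) (hC : C.IsSymm) :
    (∃ (r : ℕ) (u : Fin r → (Fin n → ℝ)),
      (∀ k i, 0 ≤ u k i) ∧ ∀ i j, C i j = ∑ k, u k i * u k j) ↔
    (∃ μ : Measure (Fin n → ℝ),
      μ {x : Fin n → ℝ | (∀ i, 0 ≤ x i) ∧ ∑ i, x i = 1}ᶜ = 0 ∧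
      ∀ i j, Integrable (fun x => x i * x j) μ ∧ C i j = ∫ x, x i * x j ∂μ) :=
  completelyPositive_iff_simplex_measure_general n C
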